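/- arXiv:math/0701343 — 6 statements merged into one kernel-verified Lean document; each statement's English description precedes it below -/
import Mathlib

section
/- Let L be a number field. For every algebraic integer α ∈ O_L one has Σ_σ |σ(α)|² − Σ_σ Re(σ(α)) ≥ Σ_σ |σ(α)|² − Σ_σ |σ(α)| ≥ 0, where all sums range over the [L:ℚ] field embeddings σ : L → ℂ. -/
/-!
The first inequality holds termwise since `Re z ≤ |z|`. For the second, `log t ≤ t - 1 ≤ t² - t`
for `t ≥ 0`, and summing `log |σ(α)|` over all embeddings gives `log |N(α)|`, which is
nonnegative because the norm of an algebraic integer is a rational integer.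
-/

open NumberField

lemma Real.log_le_sq_sub_self {t : ℝ} (ht : 0 ≤ t) : Real.log t ≤ t ^ 2 - t := by
  obtain rfl | ht := ht.eq_or_lt
  · simp
  · nlinarith [Real.log_le_sub_one_of_pos ht, sq_nonneg (t - 1)]

namespace NumberField

variable {L : Type*} [Field L] [NumberField L]

lemma prod_norm_embeddings_eq_abs_norm (x : L) :
    ∏ σ : L →+* ℂ, ‖σ x‖ = |(Algebra.norm ℚ x : ℝ)| := by
  rw [Fintype.prod_equiv (RingHom.equivRatAlgHom _ _) (fun σ => ‖σ x‖) (fun φ => ‖φ x‖)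
      (fun _ => by simp [RingHom.equivRatAlgHom_apply]), ← norm_prod,
    ← Algebra.norm_eq_prod_embeddings, eq_ratCast, Complex.norm_ratCast]

lemma sum_log_norm_embeddings_nonneg (α : 𝓞 L) :
    0 ≤ ∑ σ : L →+* ℂ, Real.log ‖σ (α : L)‖ := by
  by_cases hα : α = 0
  · simp [hα]
  have hσα (σ : L →+* ℂ) : ‖σ (α : L)‖ ≠ 0 := by simpa using hα
  rw [← Real.log_prod fun σ _ => hσα σ, prod_norm_embeddings_eq_abs_norm, Real.log_abs,
    ← Algebra.coe_norm_int, Rat.cast_intCast]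
  exact Real.log_intCast_nonneg _

end NumberField

/-- Lemma 5.8 of Bost–Künnemann: for any algebraic integer `α` in a number field `L`,
`Σ_σ |σ(α)|² − Σ_σ Re(σ(α)) ≥ Σ_σ |σ(α)|² − Σ_σ |σ(α)| ≥ 0`,
the sums ranging over all field embeddings `σ : L → ℂ`. -/
theorem statement0 (L : Type*) [Field L] [NumberField L] (α : 𝓞 L) :
    ((∑ σ : L →+* ℂ, ‖σ (α : L)‖ ^ 2) -
        ∑ σ : L →+* ℂ, (σ (α : L)).re ≥
      (∑ σ : L →+* ℂ, ‖σ (α : L)‖ ^ 2) -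
        ∑ σ : L →+* ℂ, ‖σ (α : L)‖) ∧
    ((∑ σ : L →+* ℂ, ‖σ (α : L)‖ ^ 2) -
        ∑ σ : L →+* ℂ, ‖σ (α : L)‖ ≥ 0) := by
  have hre : ∑ σ : L →+* ℂ, (σ (α : L)).re ≤ ∑ σ : L →+* ℂ, ‖σ (α : L)‖ :=
    Finset.sum_le_sum fun σ _ => Complex.re_le_norm _
  have hlog : ∑ σ : L →+* ℂ, Real.log ‖σ (α : L)‖ ≤
      ∑ σ : L →+* ℂ, (‖σ (α : L)‖ ^ 2 - ‖σ (α : L)‖) :=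
    Finset.sum_le_sum fun σ _ => Real.log_le_sq_sub_self (norm_nonneg _)
  rw [Finset.sum_sub_distrib] at hlog
  exact ⟨by linarith, by linarith [sum_log_norm_embeddings_nonneg α]⟩
end

section
/- Let a₀, a₁ be positive coprime integers and let b₀, b₁ be integers with a₀b₁ − a₁b₀ = 1. Then for every integer m one has |a₀b₀ + a₁b₁ − m(a₀² + a₁²)| ≥ √((a₀² + a₁²)/2). Equivalently, the distance from the rational number (a₀b₀ + a₁b₁)/(a₀² + a₁²) to the nearest integer is at least 1/(√2·√(a₀² + a₁²)). -/
/-!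
With `N = a₀² + a₁²` and `b = (b₀, b₁)`, the Brahmagupta–Fibonacci identity gives
`(a₀b₀ + a₁b₁)² + (a₀b₁ − a₁b₀)² = N (b₀² + b₁²)`. Replacing `b` by `b − m a` leaves the
determinant equal to `1` and turns `a₀b₀ + a₁b₁` into `c = a₀b₀ + a₁b₁ − mN`, so `c² + 1` is a
positive multiple of `N`. Since `a₀, a₁ ≠ 0` force `N ≥ 2`, we get `c ≠ 0`, hence `N ≤ c² + 1 ≤ 2c²`.
-/

theorem sq_dot_add_one_eq_of_det_eq_one {a₀ a₁ b₀ b₁ : ℤ} (hdet : a₀ * b₁ - a₁ * b₀ = 1) :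
    (a₀ * b₀ + a₁ * b₁) ^ 2 + 1 = (a₀ ^ 2 + a₁ ^ 2) * (b₀ ^ 2 + b₁ ^ 2) := by
  linear_combination -(a₀ * b₁ - a₁ * b₀ + 1) * hdet

theorem Int.le_two_mul_sq_of_sq_add_one_eq_mul {c N K : ℤ} (hN : 2 ≤ N) (hK : 0 ≤ K)
    (h : c ^ 2 + 1 = N * K) : N ≤ 2 * c ^ 2 := by
  have hK_ne : K ≠ 0 := by
    rintro rfl
    nlinarith [sq_nonneg c]
  have hK_pos : 1 ≤ K := by omega
  have hc : 1 ≤ c ^ 2 := by nlinarith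
  nlinarith

theorem sq_add_sq_le_two_mul_sq_dot_of_det_eq_one {a₀ a₁ b₀ b₁ : ℤ} (ha₀ : a₀ ≠ 0)
    (ha₁ : a₁ ≠ 0) (hdet : a₀ * b₁ - a₁ * b₀ = 1) :
    a₀ ^ 2 + a₁ ^ 2 ≤ 2 * (a₀ * b₀ + a₁ * b₁) ^ 2 := by
  have hN : 2 ≤ a₀ ^ 2 + a₁ ^ 2 := by
    have := Int.one_le_abs ha₀
    have := Int.one_le_abs ha₁
    nlinarith [sq_abs a₀, sq_abs a₁]
  exact Int.le_two_mul_sq_of_sq_add_one_eq_mul hN (by positivity)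
    (sq_dot_add_one_eq_of_det_eq_one hdet)

theorem statement8_general (a₀ a₁ b₀ b₁ : ℤ) (ha₀ : 0 < a₀) (ha₁ : 0 < a₁)
    (hdet : a₀ * b₁ - a₁ * b₀ = 1) (m : ℤ) :
    Real.sqrt (((a₀ ^ 2 + a₁ ^ 2 : ℤ) : ℝ) / 2) ≤
      |((a₀ * b₀ + a₁ * b₁ - m * (a₀ ^ 2 + a₁ ^ 2) : ℤ) : ℝ)| := by
  have hdet' : a₀ * (b₁ - m * a₁) - a₁ * (b₀ - m * a₀) = 1 := by linear_combination hdet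
  have hle := sq_add_sq_le_two_mul_sq_dot_of_det_eq_one ha₀.ne' ha₁.ne' hdet'
  have hdot : a₀ * (b₀ - m * a₀) + a₁ * (b₁ - m * a₁) =
      a₀ * b₀ + a₁ * b₁ - m * (a₀ ^ 2 + a₁ ^ 2) := by ring
  rw [hdot] at hle
  rw [← Real.sqrt_sq_eq_abs]
  refine Real.sqrt_le_sqrt ?_
  have hle' := (Int.cast_le (R := ℝ)).mpr hle
  push_cast at hle' ⊢
  linarith

/-- Key estimate of Proposition 4.2: if `a₀, a₁` are positive coprime integers and
`a₀b₁ − a₁b₀ = 1`, then for every integer `m`,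
`|a₀b₀ + a₁b₁ − m(a₀² + a₁²)| ≥ √((a₀² + a₁²)/2)`. -/
theorem statement8 (a₀ a₁ b₀ b₁ : ℤ) (ha₀ : 0 < a₀) (ha₁ : 0 < a₁)
    (hcop : IsCoprime a₀ a₁) (hdet : a₀ * b₁ - a₁ * b₀ = 1) (m : ℤ) :
    Real.sqrt (((a₀ ^ 2 + a₁ ^ 2 : ℤ) : ℝ) / 2) ≤
      |((a₀ * b₀ + a₁ * b₁ - m * (a₀ ^ 2 + a₁ ^ 2) : ℤ) : ℝ)| :=
  statement8_general a₀ a₁ b₀ b₁ ha₀ ha₁ hdet m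
end

section
/- Let n₁ and n₂ be coprime positive integers and n = n₁n₂. Let ζ₁, ζ₂ ∈ ℂ be primitive n₁-th and n₂-th roots of unity, and let K₁ = ℚ(ζ₁), K₂ = ℚ(ζ₂) and K = ℚ(ζ₁ζ₂) = K₁K₂ (the n-th cyclotomic field). Then for all a, a′ ∈ K₁ and b, b′ ∈ K₂ one has Σ_{σ : K → ℂ} σ(ab)·conj(σ(a′b′)) = ( Σ_{σ₁ : K₁ → ℂ} σ₁(a)·conj(σ₁(a′)) ) · ( Σ_{σ₂ : K₂ → ℂ} σ₂(b)·conj(σ₂(b′)) ), where each sum ranges over all field embeddings into ℂ. -/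
/-!
Restricting an embedding `σ : K → ℂ` to `K₁` and `K₂` gives a map to pairs of embeddings. It is
injective because `K` is generated by `ι₁ ζ₁ * ι₂ ζ₂`, and both sides have `φ(n₁ n₂) = φ(n₁) φ(n₂)`
elements, so it is a bijection. Each summand on the left splits as a product of a term depending
only on `σ ∘ ι₁` and one depending only on `σ ∘ ι₂`, so the sum factors.
-/

open IntermediateField Polynomial

theorem IsPrimitiveRoot.mul_of_coprime {M : Type*} [CommMonoid M] {ζ ξ : M} {k l : ℕ}
    (hζ : IsPrimitiveRoot ζ k) (hξ : IsPrimitiveRoot ξ l) (hkl : k.Coprime l) :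
    IsPrimitiveRoot (ζ * ξ) (k * l) := by
  obtain rfl := hζ.eq_orderOf
  obtain rfl := hξ.eq_orderOf
  rw [← (Commute.all ζ ξ).orderOf_mul_eq_mul_orderOf_of_coprime hkl]
  exact IsPrimitiveRoot.orderOf _

theorem finrank_eq_totient_of_adjoin_primitiveRoot {F : Type*} [Field F] [CharZero F] {n : ℕ}
    (hn : 0 < n) {ζ : F} (hζ : IsPrimitiveRoot ζ n) (hF : adjoin ℚ {ζ} = ⊤) :
    Module.finrank ℚ F = n.totient := by
  have hint : IsIntegral ℚ ζ := (hζ.isIntegral hn).tower_top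
  rw [← finrank_top', ← hF, adjoin.finrank hint, ← cyclotomic_eq_minpoly_rat hζ hn,
    natDegree_cyclotomic]

theorem RingHom.ext_of_adjoin_rat_eq_top {K L : Type*} [Field K] [CharZero K] [DivisionRing L]
    [CharZero L] {s : Set K} (hs : adjoin ℚ s = ⊤) {σ τ : K →+* L} (h : Set.EqOn σ τ s) :
    σ = τ := by
  have hext : σ.toRatAlgHom.comp (⊤ : IntermediateField ℚ K).val =
      τ.toRatAlgHom.comp (⊤ : IntermediateField ℚ K).val :=
    algHom_ext_of_eq_adjoin ℚ hs.symm fun _ hx ↦ h hx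
  ext x
  exact congr($hext ⟨x, mem_top⟩)

theorem RingHom.comp_pair_injective_of_adjoin_mul_eq_top {K₁ K₂ K L : Type*} [Field K₁]
    [Field K₂] [Field K] [CharZero K] [DivisionRing L] [CharZero L] (ι₁ : K₁ →+* K)
    (ι₂ : K₂ →+* K) {x : K₁} {y : K₂} (hK : adjoin ℚ {ι₁ x * ι₂ y} = ⊤) :
    Function.Injective fun σ : K →+* L ↦ (σ.comp ι₁, σ.comp ι₂) := by
  intro σ τ hστ
  obtain ⟨h₁, h₂⟩ : σ.comp ι₁ = τ.comp ι₁ ∧ σ.comp ι₂ = τ.comp ι₂ := Prod.ext_iff.mp hστ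
  refine RingHom.ext_of_adjoin_rat_eq_top hK ?_
  rintro _ rfl
  simp only [map_mul, ← RingHom.comp_apply, h₁, h₂]

theorem RingHom.comp_pair_bijective_of_cyclotomic {n₁ n₂ : ℕ} (h₁pos : 0 < n₁) (h₂pos : 0 < n₂)
    (hcop : n₁.Coprime n₂) {K₁ K₂ K A : Type*} [Field K₁] [NumberField K₁] [Field K₂]
    [NumberField K₂] [Field K] [NumberField K] [Field A] [CharZero A] [IsAlgClosed A]
    (ι₁ : K₁ →+* K) (ι₂ : K₂ →+* K) {ζ₁ : K₁} {ζ₂ : K₂}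
    (hζ₁ : IsPrimitiveRoot ζ₁ n₁) (hζ₂ : IsPrimitiveRoot ζ₂ n₂)
    (hK₁ : adjoin ℚ {ζ₁} = ⊤) (hK₂ : adjoin ℚ {ζ₂} = ⊤) (hK : adjoin ℚ {ι₁ ζ₁ * ι₂ ζ₂} = ⊤) :
    Function.Bijective fun σ : K →+* A ↦ (σ.comp ι₁, σ.comp ι₂) := by
  have hζ : IsPrimitiveRoot (ι₁ ζ₁ * ι₂ ζ₂) (n₁ * n₂) :=
    (hζ₁.map_of_injective ι₁.injective).mul_of_coprime (hζ₂.map_of_injective ι₂.injective) hcop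
  refine (Fintype.bijective_iff_injective_and_card _).mpr
    ⟨RingHom.comp_pair_injective_of_adjoin_mul_eq_top ι₁ ι₂ hK, ?_⟩
  rw [Fintype.card_prod, NumberField.Embeddings.card, NumberField.Embeddings.card,
    NumberField.Embeddings.card, finrank_eq_totient_of_adjoin_primitiveRoot h₁pos hζ₁ hK₁,
    finrank_eq_totient_of_adjoin_primitiveRoot h₂pos hζ₂ hK₂,
    finrank_eq_totient_of_adjoin_primitiveRoot (Nat.mul_pos h₁pos h₂pos) hζ hK,
    Nat.totient_mul hcop]

/-- Isometry content of Lemma 5.12 (Kitaoka): let `K₁ = ℚ(ζ₁)`, `K₂ = ℚ(ζ₂)` be the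
`n₁`-th and `n₂`-th cyclotomic fields with `n₁, n₂` coprime, embedded via `ι₁, ι₂` in the
`n`-th cyclotomic field `K = ℚ(ζ₁ζ₂)`, `n = n₁n₂`. Then for all `a, a′ ∈ K₁`, `b, b′ ∈ K₂`,
`Σ_{σ : K → ℂ} σ(ab)·conj(σ(a′b′)) = (Σ_{σ₁} σ₁(a)conj(σ₁(a′)))·(Σ_{σ₂} σ₂(b)conj(σ₂(b′)))`. -/
theorem statement10 (n₁ n₂ : ℕ) (h₁pos : 0 < n₁) (h₂pos : 0 < n₂)
    (hcop : Nat.Coprime n₁ n₂)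
    (K₁ K₂ K : Type*) [Field K₁] [NumberField K₁] [Field K₂] [NumberField K₂]
    [Field K] [NumberField K]
    (ι₁ : K₁ →+* K) (ι₂ : K₂ →+* K)
    (ζ₁ : K₁) (ζ₂ : K₂)
    (hζ₁ : IsPrimitiveRoot ζ₁ n₁) (hζ₂ : IsPrimitiveRoot ζ₂ n₂)
    (hK₁ : IntermediateField.adjoin ℚ ({ζ₁} : Set K₁) = ⊤)
    (hK₂ : IntermediateField.adjoin ℚ ({ζ₂} : Set K₂) = ⊤)
    (hK : IntermediateField.adjoin ℚ ({ι₁ ζ₁ * ι₂ ζ₂} : Set K) = ⊤)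
    (a a' : K₁) (b b' : K₂) :
    ∑ σ : K →+* ℂ, σ (ι₁ a * ι₂ b) * (starRingEnd ℂ) (σ (ι₁ a' * ι₂ b')) =
      (∑ σ₁ : K₁ →+* ℂ, σ₁ a * (starRingEnd ℂ) (σ₁ a')) *
        (∑ σ₂ : K₂ →+* ℂ, σ₂ b * (starRingEnd ℂ) (σ₂ b')) := by
  rw [Fintype.sum_mul_sum, ← Fintype.sum_prod_type']
  refine Fintype.sum_bijective _ (RingHom.comp_pair_bijective_of_cyclotomic h₁pos h₂pos hcop
    ι₁ ι₂ hζ₁ hζ₂ hK₁ hK₂ hK) _ _ fun σ ↦ ?_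
  simp only [RingHom.comp_apply, map_mul]
  ring
end

section
/- For every integer n ≥ 4, the root lattice Dₙ = {x ∈ ℤⁿ : x₁ + ⋯ + xₙ is even}, viewed as a lattice in ℝⁿ with the standard inner product, is not of Voronoi's first kind: there do not exist vectors v₀, v₁, …, vₙ ∈ Dₙ such that (v₁, …, vₙ) is a ℤ-basis of Dₙ, v₀ + v₁ + ⋯ + vₙ = 0, and ⟨v_i, v_j⟩ ≤ 0 for all i ≠ j. -/
/-!
Let `v₀, …, vₙ` be an obtuse superbase of `Dₙ`. By Selling's identity
`‖∑ cₖ • vₖ‖² = -½ ∑ₖₗ ⟪vₖ, vₗ⟫ (cₖ - cₗ)²` and obtuseness, the squared norm of `∑ cₖ • vₖ`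
dominates the sum of the squared norms of its two lowest superlevel-set sums `∑_{cₖ ≥ t} vₖ`.
Nonzero vectors of `Dₙ` have squared norm at least 2, so every root of `Dₙ` is a subset sum
`∑_{k ∈ S} vₖ`.

Apply this to the orthogonal roots `Xᵢ = e₀ ± e₁, e₂ ± e₃`, with subsets `Sᵢ`, and to the roots
`½ ∑ εᵢ Xᵢ` (`εᵢ = ±1`). Since coefficients in the superbase are unique up to a constant, the
patterns `{i | k ∈ Sᵢ} ⊆ Fin 4` all have the same parity and no two are complementary, so at most
4 patterns occur. But the constant function `1` and the indicators of the `Sᵢ` are 5 linearly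
independent functions of `k` (the map `c ↦ ∑ cₖ • vₖ` kills `1` and sends the indicators to the
independent `Xᵢ`), which forces at least 5 distinct patterns.
-/

/-- The root lattice `Dₙ = {x ∈ ℤⁿ : x₁ + ⋯ + xₙ is even}`, as a subset of euclidean
`ℝⁿ`. -/
def Dset (n : ℕ) : Set (EuclideanSpace ℝ (Fin n)) :=
  {x | (∀ i, ∃ m : ℤ, x i = (m : ℝ)) ∧ ∃ m : ℤ, ∑ i, x i = 2 * (m : ℝ)}

open Finset
open scoped RealInnerProductSpace

theorem sq_sub_ite_add_sq_sub_ite_le (t A B : ℤ) :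
    ((if t ≤ A then 1 else 0) - (if t ≤ B then 1 else 0)) ^ 2
      + ((if t + 1 ≤ A then 1 else 0) - (if t + 1 ≤ B then 1 else 0)) ^ 2 ≤ (A - B) ^ 2 := by
  split_ifs <;> nlinarith

section Selling
variable {E ι : Type*} [NormedAddCommGroup E] [InnerProductSpace ℝ E] [Fintype ι] {v : ι → E}

theorem norm_sum_smul_sq (r : ι → ℝ) :
    ‖∑ k, r k • v k‖ ^ 2 = ∑ k, ∑ l, r k * r l * ⟪v k, v l⟫ := by
  simp_rw [← real_inner_self_eq_norm_sq, sum_inner, inner_sum, real_inner_smul_left,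
    real_inner_smul_right, mul_assoc]

/-- Selling's identity. -/
theorem sum_sum_inner_mul_sub_sq (hsum : ∑ k, v k = 0) (r : ι → ℝ) :
    ∑ k, ∑ l, ⟪v k, v l⟫ * (r k - r l) ^ 2 = -2 * ‖∑ k, r k • v k‖ ^ 2 := by
  have hrow : ∀ k, ∑ l, ⟪v k, v l⟫ = 0 := fun k => by rw [← inner_sum, hsum, inner_zero_right]
  have hcol : ∀ l, ∑ k, ⟪v k, v l⟫ = 0 := fun l => by rw [← sum_inner, hsum, inner_zero_left]
  have hexpand : ∀ k l, ⟪v k, v l⟫ * (r k - r l) ^ 2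
      = r k ^ 2 * ⟪v k, v l⟫ + r l ^ 2 * ⟪v k, v l⟫ - 2 * (r k * r l * ⟪v k, v l⟫) :=
    fun k l => by ring
  simp_rw [hexpand, sum_sub_distrib, sum_add_distrib, ← mul_sum]
  rw [sum_comm (f := fun k l => r l ^ 2 * ⟪v k, v l⟫)]
  simp_rw [← mul_sum, hrow, hcol, norm_sum_smul_sq]
  simp

theorem norm_sq_add_norm_sq_le_of_inner_nonpos (hsum : ∑ k, v k = 0)
    (hobtuse : ∀ k l, k ≠ l → ⟪v k, v l⟫ ≤ 0) {r s t : ι → ℝ}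
    (h : ∀ k l, (s k - s l) ^ 2 + (t k - t l) ^ 2 ≤ (r k - r l) ^ 2) :
    ‖∑ k, s k • v k‖ ^ 2 + ‖∑ k, t k • v k‖ ^ 2 ≤ ‖∑ k, r k • v k‖ ^ 2 := by
  have hterm : ∀ k l, ⟪v k, v l⟫ * (r k - r l) ^ 2
      ≤ ⟪v k, v l⟫ * (s k - s l) ^ 2 + ⟪v k, v l⟫ * (t k - t l) ^ 2 := fun k l => by
    rcases eq_or_ne k l with rfl | hkl
    · simp
    · nlinarith [hobtuse k l hkl, h k l]
  have := sum_le_sum fun k (_ : k ∈ univ) => sum_le_sum fun l (_ : l ∈ univ) => hterm k l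
  simp_rw [sum_add_distrib, sum_sum_inner_mul_sub_sq hsum] at this
  linarith

theorem norm_sq_add_norm_sq_superlevel_le (hsum : ∑ k, v k = 0)
    (hobtuse : ∀ k l, k ≠ l → ⟪v k, v l⟫ ≤ 0) (c : ι → ℤ) (t : ℤ) :
    ‖∑ k with t ≤ c k, v k‖ ^ 2 + ‖∑ k with t + 1 ≤ c k, v k‖ ^ 2 ≤ ‖∑ k, c k • v k‖ ^ 2 := by
  have hind : ∀ s : ℤ, ∑ k with s ≤ c k, v k = ∑ k, ((if s ≤ c k then 1 else 0 : ℤ) : ℝ) • v k :=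
    fun s => by simp [sum_filter]
  simp_rw [hind, ← Int.cast_smul_eq_zsmul ℝ (c _)]
  exact norm_sq_add_norm_sq_le_of_inner_nonpos hsum hobtuse fun k l => by
    exact_mod_cast sq_sub_ite_add_sq_sub_ite_le t (c k) (c l)

end Selling

section Superbase
variable {M ι : Type*} [AddCommGroup M] [Fintype ι]

theorem sum_sub_const_zsmul {v : ι → M} (hsum : ∑ k, v k = 0) (c : ι → ℤ) (a : ℤ) :
    ∑ k, (c k - a) • v k = ∑ k, c k • v k := by
  simp [sub_smul, sum_sub_distrib, ← smul_sum, hsum]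

theorem sum_ite_mem_zsmul [DecidableEq ι] (v : ι → M) (S : Finset ι) :
    ∑ k, (if k ∈ S then 1 else 0 : ℤ) • v k = ∑ k ∈ S, v k := by
  simp [ite_smul]

variable {m : ℕ} {v : Fin (m + 1) → M}

theorem sub_eq_sub_of_sum_zsmul_eq (hsum : ∑ k, v k = 0)
    (hli : LinearIndependent ℤ fun i : Fin m => v i.succ) {c d : Fin (m + 1) → ℤ}
    (h : ∑ k, c k • v k = ∑ k, d k • v k) (k l : Fin (m + 1)) : c k - c l = d k - d l := by
  set e := c - d
  have he : ∑ i : Fin m, (e i.succ - e 0) • v i.succ = 0 := by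
    have h0 := sum_sub_const_zsmul hsum e (e 0)
    rw [Fin.sum_univ_succ, sub_self, zero_smul, zero_add] at h0
    rw [h0]
    simp [e, sub_smul, sum_sub_distrib, h]
  have hconst : ∀ k, e k = e 0 := Fin.cases rfl fun i =>
    sub_eq_zero.mp (Fintype.linearIndependent_iff.mp hli _ he i)
  have hk := hconst k
  have hl := hconst l
  simp only [e, Pi.sub_apply] at hk hl
  omega

end Superbase

structure IsObtuseSuperbase {E : Type*} [NormedAddCommGroup E] [InnerProductSpace ℝ E] {m : ℕ}
    (L : AddSubgroup E) (v : Fin (m + 1) → E) : Prop where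
  mem : ∀ k, v k ∈ L
  existsUnique_repr : ∀ x ∈ L, ∃! c : Fin m → ℤ, x = ∑ i : Fin m, c i • v i.succ
  sum_eq_zero : ∑ k, v k = 0
  inner_nonpos : ∀ k l, k ≠ l → ⟪v k, v l⟫ ≤ 0

namespace IsObtuseSuperbase

variable {E : Type*} [NormedAddCommGroup E] [InnerProductSpace ℝ E] {m : ℕ}
  {L : AddSubgroup E} {v : Fin (m + 1) → E}

theorem linearIndependent (hv : IsObtuseSuperbase L v) :
    LinearIndependent ℤ fun i : Fin m => v i.succ :=
  Fintype.linearIndependent_iff.mpr fun g hg =>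
    congrFun ((hv.existsUnique_repr 0 L.zero_mem).unique hg.symm (by simp))

theorem exists_eq_sum_zsmul (hv : IsObtuseSuperbase L v) {x : E} (hx : x ∈ L) :
    ∃ c : Fin (m + 1) → ℤ, x = ∑ k, c k • v k := by
  obtain ⟨c, hc, -⟩ := hv.existsUnique_repr x hx
  exact ⟨Fin.cons 0 c, by simp [Fin.sum_univ_succ, hc]⟩

theorem sum_ne_zero (hv : IsObtuseSuperbase L v) {S : Finset (Fin (m + 1))} {a b : Fin (m + 1)}
    (ha : a ∈ S) (hb : b ∉ S) : ∑ k ∈ S, v k ≠ 0 := by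
  intro h
  have := sub_eq_sub_of_sum_zsmul_eq hv.sum_eq_zero hv.linearIndependent (d := 0)
    (by rw [sum_ite_mem_zsmul, h]; simp) a b
  simp [ha, hb] at this

theorem exists_finset_eq_sum (hv : IsObtuseSuperbase L v) {μ : ℝ}
    (hmin : ∀ y ∈ L, y ≠ 0 → μ ≤ ‖y‖ ^ 2) {x : E} (hx : x ∈ L) (hlt : ‖x‖ ^ 2 < 2 * μ) :
    ∃ S : Finset (Fin (m + 1)), x = ∑ k ∈ S, v k := by
  obtain ⟨c, rfl⟩ := hv.exists_eq_sum_zsmul hx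
  obtain ⟨k₀, -, hk₀⟩ := exists_min_image univ c univ_nonempty
  by_cases htwo : ∀ k, c k ≤ c k₀ + 1
  · refine ⟨univ.filter (c k₀ + 1 ≤ c ·), ?_⟩
    rw [← sum_sub_const_zsmul hv.sum_eq_zero c (c k₀), ← sum_ite_mem_zsmul v]
    refine sum_congr rfl fun k _ => ?_
    obtain h | h : c k = c k₀ ∨ c k = c k₀ + 1 := by
      have := hk₀ k (mem_univ k); have := htwo k; omega
    all_goals simp [h]
  · push Not at htwo
    obtain ⟨k₁, hk₁⟩ := htwo
    have hsuper : ∀ t, c k₀ < t → t ≤ c k₁ → μ ≤ ‖∑ k with t ≤ c k, v k‖ ^ 2 := fun t h₀ h₁ =>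
      hmin _ (L.sum_mem fun k _ => hv.mem k)
        (hv.sum_ne_zero (by simpa using h₁) (by simpa using h₀))
    have := norm_sq_add_norm_sq_superlevel_le hv.sum_eq_zero hv.inner_nonpos c (c k₀ + 1)
    linarith [hsuper (c k₀ + 1) (by omega) (by omega), hsuper (c k₀ + 1 + 1) (by omega) (by omega)]

end IsObtuseSuperbase

def Dlattice (n : ℕ) : AddSubgroup (EuclideanSpace ℝ (Fin n)) where
  carrier := Dset n
  add_mem' := by
    rintro x y ⟨hx, a, ha⟩ ⟨hy, b, hb⟩
    refine ⟨fun i => ?_, a + b, by simp [sum_add_distrib, ha, hb]; ring⟩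
    obtain ⟨p, hp⟩ := hx i
    obtain ⟨q, hq⟩ := hy i
    exact ⟨p + q, by simp [hp, hq]⟩
  zero_mem' := ⟨fun _ => ⟨0, by simp⟩, 0, by simp⟩
  neg_mem' := by
    rintro x ⟨hx, a, ha⟩
    refine ⟨fun i => ?_, -a, by simp [sum_neg_distrib, ha]⟩
    obtain ⟨p, hp⟩ := hx i
    exact ⟨-p, by simp [hp]⟩

theorem two_le_norm_sq_of_mem_Dset {n : ℕ} {x : EuclideanSpace ℝ (Fin n)} (hx : x ∈ Dset n)
    (hx0 : x ≠ 0) : 2 ≤ ‖x‖ ^ 2 := by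
  obtain ⟨hcoord, a, ha⟩ := hx
  choose z hz using hcoord
  have hsum : ∑ i, z i = 2 * a := by simp only [hz] at ha; exact_mod_cast ha
  have hnorm : ‖x‖ ^ 2 = ((∑ i, z i ^ 2 : ℤ) : ℝ) := by
    simp [EuclideanSpace.real_norm_sq_eq, hz]
  have heven : Even (∑ i, z i ^ 2) := by
    have : Even (∑ i, (z i ^ 2 - z i)) :=
      even_sum _ fun i _ => by simpa [sq, mul_sub] using Int.even_mul_pred_self (z i)
    rw [sum_sub_distrib, hsum] at this
    simpa [parity_simps] using this
  obtain ⟨j, hj⟩ : ∃ j, z j ≠ 0 := by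
    by_contra! h
    exact hx0 (by ext i; simp [hz, h])
  have hpos : 1 ≤ ∑ i, z i ^ 2 := le_trans (by nlinarith [sq_pos_of_ne_zero hj] : 1 ≤ z j ^ 2)
    (single_le_sum (fun i _ => sq_nonneg (z i)) (mem_univ j))
  obtain ⟨r, hr⟩ := heven
  rw [hnorm]
  exact_mod_cast (by omega : 2 ≤ ∑ i, z i ^ 2)

section Embed
variable {n : ℕ} (hn : 4 ≤ n)

noncomputable def embedFour : (Fin 4 → ℤ) →ₗ[ℤ] EuclideanSpace ℝ (Fin n) :=
  Fintype.linearCombination ℤ fun t => EuclideanSpace.single (Fin.castLE hn t) 1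

theorem embedFour_apply (z : Fin 4 → ℤ) (j : Fin n) :
    embedFour hn z j = ((∑ t, if j = Fin.castLE hn t then z t else 0 : ℤ) : ℝ) := by
  simp [embedFour, Fintype.linearCombination_apply, Pi.single_apply]

theorem inner_embedFour (z w : Fin 4 → ℤ) :
    ⟪embedFour hn z, embedFour hn w⟫ = ((∑ t, z t * w t : ℤ) : ℝ) := by
  simp only [embedFour, Fintype.linearCombination_apply, ← Int.cast_smul_eq_zsmul ℝ]
  have hO : Orthonormal ℝ fun t => EuclideanSpace.single (Fin.castLE hn t) (1 : ℝ) :=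
    EuclideanSpace.orthonormal_single.comp _ (Fin.castLE_injective hn)
  rw [hO.inner_sum]
  simp

theorem embedFour_mem_Dset {z : Fin 4 → ℤ} (hz : Even (∑ t, z t)) : embedFour hn z ∈ Dset n := by
  obtain ⟨a, ha⟩ := hz
  refine ⟨fun j => ⟨_, embedFour_apply hn z j⟩, a, ?_⟩
  simp_rw [embedFour_apply, Int.cast_sum]
  rw [sum_comm]
  simp only [Int.cast_ite, Int.cast_zero, sum_ite_eq', mem_univ, if_true]
  exact_mod_cast ha.trans (two_mul a).symm

end Embed

def crossVec : Fin 4 → Fin 4 → ℤ := ![![1, 1, 0, 0], ![1, -1, 0, 0], ![0, 0, 1, 1], ![0, 0, 1, -1]]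

theorem sum_crossVec_mul (i j : Fin 4) :
    ∑ t, crossVec i t * crossVec j t = if i = j then 2 else 0 := by
  fin_cases i <;> fin_cases j <;> simp [crossVec, Fin.sum_univ_four]

theorem even_sum_crossVec (i : Fin 4) : Even (∑ t, crossVec i t) := by
  fin_cases i <;> simp [crossVec, Fin.sum_univ_four]

theorem exists_sum_sign_smul_crossVec {ε : Fin 4 → ℤ} (hε : ∀ i, ε i = 1 ∨ ε i = -1) :
    ∃ w : Fin 4 → ℤ,
      ∑ i, ε i • crossVec i = (2 : ℤ) • w ∧ Even (∑ t, w t) ∧ ∑ t, w t * w t = 2 := by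
  refine ⟨![(ε 0 + ε 1) / 2, (ε 0 - ε 1) / 2, (ε 2 + ε 3) / 2, (ε 2 - ε 3) / 2], ?_⟩
  rcases hε 0 with h0 | h0 <;> rcases hε 1 with h1 | h1 <;> rcases hε 2 with h2 | h2 <;>
    rcases hε 3 with h3 | h3 <;>
    refine ⟨?_, ?_, ?_⟩ <;> (try ext t; fin_cases t) <;>
    simp [crossVec, Fin.sum_univ_four, h0, h1, h2, h3]

theorem card_le_four_of_parity_of_ne_compl (𝒜 : Finset (Finset (Fin 4)))
    (hpar : ∀ A ∈ 𝒜, ∀ B ∈ 𝒜, #A % 2 = #B % 2) (hcompl : ∀ A ∈ 𝒜, ∀ B ∈ 𝒜, A ≠ Bᶜ) :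
    #𝒜 ≤ 4 := by
  rcases 𝒜.eq_empty_or_nonempty with rfl | ⟨A₀, hA₀⟩
  · simp
  set C := univ.filter fun A : Finset (Fin 4) => #A % 2 = #A₀ % 2
  have hC : #C = 8 := by
    have : ∀ r < 2, #(univ.filter fun A : Finset (Fin 4) => #A % 2 = r) = 8 := by decide
    exact this _ (Nat.mod_lt _ two_pos)
  have hsub : 𝒜 ∪ 𝒜.image compl ⊆ C := by
    intro A hA
    simp only [C, mem_filter, mem_univ, true_and]
    rcases mem_union.mp hA with hA | hA
    · exact hpar A hA A₀ hA₀
    · obtain ⟨B, hB, rfl⟩ := mem_image.mp hA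
      rw [card_compl, Fintype.card_fin, ← hpar B hB A₀ hA₀]
      have := card_le_univ B
      simp only [Fintype.card_fin] at this
      omega
  have hdisj : Disjoint 𝒜 (𝒜.image compl) := by
    refine disjoint_left.mpr fun A hA hA' => ?_
    obtain ⟨B, hB, rfl⟩ := mem_image.mp hA'
    exact hcompl _ hA B hB rfl
  have := card_le_card hsub
  rw [card_union_of_disjoint hdisj, card_image_of_injective _ compl_injective, hC] at this
  omega

theorem card_le_four_of_sum_sign_mul_sub_mem (𝒜 : Finset (Finset (Fin 4)))
    (h : ∀ A ∈ 𝒜, ∀ B ∈ 𝒜, ∀ ε : Fin 4 → ℤ, (∀ i, ε i = 1 ∨ ε i = -1) →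
      ∑ i, ε i * ((if i ∈ A then 1 else 0) - (if i ∈ B then 1 else 0)) ∈ ({-2, 0, 2} : Finset ℤ)) :
    #𝒜 ≤ 4 := by
  refine card_le_four_of_parity_of_ne_compl 𝒜 (fun A hA B hB => ?_) ?_
  · have := h A hA B hB 1 fun _ => Or.inl rfl
    simp only [Pi.one_apply, one_mul, sum_sub_distrib, sum_boole] at this
    simp at this
    omega
  · rintro _ hA B hB rfl
    have := h _ hA B hB (fun i => if i ∈ B then -1 else 1) fun i => by split_ifs <;> simp
    have hterm : ∀ i, (if i ∈ B then -1 else 1 : ℤ) *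
        ((if i ∈ Bᶜ then 1 else 0) - (if i ∈ B then 1 else 0)) = 1 := fun i => by
      by_cases hi : i ∈ B <;> simp [hi]
    rw [sum_congr rfl fun i _ => hterm i] at this
    simp at this

theorem card_le_card_image_of_linearIndependent {α β ι : Type*} [Fintype α] [DecidableEq β]
    [Fintype ι] (f : α → β) (h : ι → β → ℝ) (hli : LinearIndependent ℝ fun j a => h j (f a)) :
    Fintype.card ι ≤ #(univ.image f) := by
  let g : α → univ.image f := fun a => ⟨f a, mem_image_of_mem f (mem_univ a)⟩
  have hG : LinearIndependent ℝ fun j (b : univ.image f) => h j b :=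
    hli.of_comp (LinearMap.funLeft ℝ ℝ g)
  simpa using hG.fintype_card_le_finrank

def patternCoord {m : ℕ} : Fin (m + 1) → Finset (Fin m) → ℝ :=
  Fin.cons (fun _ => 1) fun i A => if i ∈ A then 1 else 0

theorem linearIndependent_patternCoord {E ι : Type*} [NormedAddCommGroup E]
    [InnerProductSpace ℝ E] [Fintype ι] [Nonempty ι] {v : ι → E} (hsum : ∑ k, v k = 0) {m : ℕ}
    (P : ι → Finset (Fin m)) (hli : LinearIndependent ℝ fun i => ∑ k with i ∈ P k, v k) :
    LinearIndependent ℝ fun j k => patternCoord j (P k) := by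
  let Φ := Fintype.linearCombination ℝ v
  let u : Fin m → ι → ℝ := fun i k => if i ∈ P k then 1 else 0
  have hΦ : ∀ i, Φ (u i) = ∑ k with i ∈ P k, v k := fun i => by
    simp [Φ, u, Fintype.linearCombination_apply, ite_smul, sum_filter]
  have hcons : (fun j k => patternCoord j (P k)) = Fin.cons (fun _ => 1) u := by
    ext j k
    cases j using Fin.cases <;> rfl
  rw [hcons, linearIndependent_finCons]
  have hΦu : Φ ∘ u = fun i => ∑ k with i ∈ P k, v k := funext hΦ
  refine ⟨.of_comp Φ (hΦu ▸ hli), fun h1 => ?_⟩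
  obtain ⟨a, ha⟩ := (Submodule.mem_span_range_iff_exists_fun ℝ).mp h1
  have hrel : ∑ i, a i • ∑ k with i ∈ P k, v k = 0 := by
    simpa [← hΦ, Φ, Fintype.linearCombination_apply, hsum] using congrArg Φ ha
  have ha0 := Fintype.linearIndependent_iff.mp hli a hrel
  simp only [ha0, zero_smul, sum_const_zero] at ha
  simpa using congrFun ha (Classical.arbitrary ι)

namespace IsObtuseSuperbase

variable {n : ℕ} {v : Fin (n + 1) → EuclideanSpace ℝ (Fin n)}

theorem exists_finset_eq_sum_of_norm_sq_eq_two (hv : IsObtuseSuperbase (Dlattice n) v)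
    {x : EuclideanSpace ℝ (Fin n)} (hx : x ∈ Dset n) (h2 : ‖x‖ ^ 2 = 2) :
    ∃ S : Finset (Fin (n + 1)), x = ∑ k ∈ S, v k :=
  hv.exists_finset_eq_sum (fun _ hy hy0 => two_le_norm_sq_of_mem_Dset hy hy0) hx (by linarith)

theorem sum_sign_mul_sub_mem (hv : IsObtuseSuperbase (Dlattice n) v) (hn : 4 ≤ n)
    {P : Fin (n + 1) → Finset (Fin 4)}
    (hP : ∀ i, embedFour hn (crossVec i) = ∑ k with i ∈ P k, v k)
    {ε : Fin 4 → ℤ} (hε : ∀ i, ε i = 1 ∨ ε i = -1) (k l : Fin (n + 1)) :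
    ∑ i, ε i * ((if i ∈ P k then 1 else 0) - (if i ∈ P l then 1 else 0)) ∈
      ({-2, 0, 2} : Finset ℤ) := by
  obtain ⟨w, hw, hweven, hwnorm⟩ := exists_sum_sign_smul_crossVec hε
  obtain ⟨B, hB⟩ := hv.exists_finset_eq_sum_of_norm_sq_eq_two (embedFour_mem_Dset hn hweven)
    (by rw [← real_inner_self_eq_norm_sq, inner_embedFour, hwnorm]; norm_num)
  have key : ∑ k, (∑ i, ε i * if i ∈ P k then 1 else 0) • v k
      = ∑ k, (2 * if k ∈ B then 1 else 0 : ℤ) • v k := by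
    calc _ = ∑ i, ε i • ∑ k with i ∈ P k, v k := by
          simp_rw [sum_smul, mul_smul, ite_smul, one_smul, zero_smul, smul_sum, sum_filter,
            smul_ite, smul_zero]
          exact sum_comm
      _ = embedFour hn (∑ i, ε i • crossVec i) := by simp_rw [map_sum, map_zsmul, hP]
      _ = _ := by
          rw [hw, map_zsmul, hB, ← sum_ite_mem_zsmul, smul_sum]
          simp_rw [mul_smul]
  have := sub_eq_sub_of_sum_zsmul_eq hv.sum_eq_zero hv.linearIndependent key k l
  simp only [mul_sub, sum_sub_distrib, this]
  split_ifs <;> simp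

end IsObtuseSuperbase

/-- Proposition B.4: for `n ≥ 4`, the root lattice `Dₙ` is not of Voronoi's first kind:
it admits no obtuse superbase, i.e. no vectors `v₀, v₁, …, vₙ ∈ Dₙ` with `(v₁, …, vₙ)` a
ℤ-basis of `Dₙ`, `v₀ + ⋯ + vₙ = 0` and `⟨v_i, v_j⟩ ≤ 0` for all `i ≠ j`. -/
theorem statement16 (n : ℕ) (hn : 4 ≤ n) :
    ¬ ∃ v : Fin (n + 1) → EuclideanSpace ℝ (Fin n),
        (∀ k, v k ∈ Dset n) ∧
        (∀ x ∈ Dset n, ∃! c : Fin n → ℤ, x = ∑ i : Fin n, c i • v i.succ) ∧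
        (∑ k, v k = 0) ∧
        (∀ k l, k ≠ l → (inner ℝ (v k) (v l) : ℝ) ≤ 0) := by
  rintro ⟨v, hmem, hrepr, hsum, hinner⟩
  have hv : IsObtuseSuperbase (Dlattice n) v := ⟨hmem, hrepr, hsum, hinner⟩
  have hX : ∀ i, ‖embedFour hn (crossVec i)‖ ^ 2 = 2 := fun i => by
    rw [← real_inner_self_eq_norm_sq, inner_embedFour, sum_crossVec_mul]; simp
  choose S hS using fun i => hv.exists_finset_eq_sum_of_norm_sq_eq_two
    (embedFour_mem_Dset hn (even_sum_crossVec i)) (hX i)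
  let P : Fin (n + 1) → Finset (Fin 4) := fun k => {i | k ∈ S i}
  have hP : ∀ i, embedFour hn (crossVec i) = ∑ k with i ∈ P k, v k := fun i => by simp [P, hS]
  have hXli : LinearIndependent ℝ fun i => embedFour hn (crossVec i) :=
    linearIndependent_of_ne_zero_of_inner_eq_zero (fun i h => by simpa [h] using hX i)
      fun i j hij => by simp only [inner_embedFour, sum_crossVec_mul, if_neg hij, Int.cast_zero]
  have h5 := card_le_card_image_of_linearIndependent P patternCoord
    (linearIndependent_patternCoord hsum P (by simpa only [hP] using hXli))
  have h4 := card_le_four_of_sum_sign_mul_sub_mem (univ.image P) (by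
    simp only [mem_image, mem_univ, true_and]
    rintro _ ⟨k, rfl⟩ _ ⟨l, rfl⟩ ε hε
    exact hv.sum_sign_mul_sub_mem hn hP hε k l)
  simp only [Fintype.card_fin] at h5
  omega
end

section
/- Every euclidean lattice of rank 3 is of Voronoi's first kind: for every discrete ℤ-submodule L spanning a 3-dimensional real inner product space E, there exist vectors v₀, v₁, v₂, v₃ ∈ L such that (v₁, v₂, v₃) is a ℤ-basis of L, v₀ + v₁ + v₂ + v₃ = 0, and ⟨v_i, v_j⟩ ≤ 0 for all i ≠ j. -/
/-!
Among all superbases of `L` pick one minimizing `∑ ‖vᵢ‖²`; it exists because a lattice has only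
finitely many vectors in a ball. If `⟪vₖ, vₗ⟫ > 0` for some `k ≠ l`, replace `vₖ` by `-vₖ` and
each of the two remaining vectors `vᵢ` by `vᵢ + vₖ`. This is again a superbase, and since the two
remaining vectors sum to `-(vₖ + vₗ)`, its energy is smaller by exactly `2⟪vₖ, vₗ⟫`. Hence a
minimizing superbase is obtuse.
-/

open Module Finset Submodule
open scoped InnerProductSpace

section Superbase

variable {M : Type*} [AddCommGroup M] {L : Submodule ℤ M}

/-- Generating `L` stands in for the usual requirement that `v₁, …, vₙ` be a basis of `L`; the two
agree when `L` has rank `n` (`IsSuperbase.exists_basis`), and this form is visibly preserved by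
unimodular moves. -/
def IsSuperbase {n : ℕ} (L : Submodule ℤ M) (v : Fin (n + 1) → M) : Prop :=
  span ℤ (Set.range v) = L ∧ ∑ i, v i = 0

namespace IsSuperbase

variable {n : ℕ} {v : Fin (n + 1) → M}

theorem mem (hv : IsSuperbase L v) (i : Fin (n + 1)) : v i ∈ L :=
  hv.1 ▸ subset_span ⟨i, rfl⟩

theorem span_range_succ (hv : IsSuperbase L v) : span ℤ (Set.range (v ∘ Fin.succ)) = L := by
  refine le_antisymm (hv.1 ▸ span_mono (Set.range_comp_subset_range _ _)) (hv.1 ▸ span_le.2 ?_)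
  rintro _ ⟨i, rfl⟩
  cases i using Fin.cases with
  | zero =>
    have hv0 : v 0 = -∑ i, (v ∘ Fin.succ) i := by
      rw [eq_neg_iff_add_eq_zero, ← hv.2, Fin.sum_univ_succ]; rfl
    rw [hv0]
    exact neg_mem (sum_mem fun i _ => subset_span ⟨i, rfl⟩)
  | succ i => exact subset_span ⟨i, rfl⟩

theorem exists_basis (hv : IsSuperbase L v) (hrank : finrank ℤ L = n) :
    ∃ b : Basis (Fin n) ℤ L, ∀ i, (b i : M) = v i.succ := by
  let u : Fin n → L := fun i => ⟨v i.succ, hv.mem _⟩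
  have hu : ⊤ ≤ span ℤ (Set.range u) := by
    rintro ⟨x, hx⟩ -
    rw [← hv.span_range_succ, mem_span_range_iff_exists_fun] at hx
    obtain ⟨c, rfl⟩ := hx
    rw [mem_span_range_iff_exists_fun]
    exact ⟨c, Subtype.ext (by simp [u])⟩
  exact ⟨basisOfTopLeSpanOfCardEqFinrank u hu (by simp [hrank]), fun i => by simp [u]⟩

end IsSuperbase

theorem isSuperbase_cons_neg_sum {n : ℕ} (b : Basis (Fin n) ℤ L) :
    IsSuperbase L (Fin.cons (-∑ i, (b i : M)) fun i => (b i : M)) := by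
  refine ⟨le_antisymm (span_le.2 ?_) ?_, by simp [Fin.sum_univ_succ]⟩
  · rintro _ ⟨i, rfl⟩
    cases i using Fin.cases with
    | zero => exact neg_mem (sum_mem fun i _ => (b i).2)
    | succ i => exact (b i).2
  · intro x hx
    have hx' := congrArg Subtype.val (b.sum_repr ⟨x, hx⟩)
    simp only [Submodule.coe_sum, Submodule.coe_smul] at hx'
    rw [← hx']
    exact sum_mem fun i _ => smul_mem _ _ (subset_span ⟨i.succ, by simp⟩)

def sellingMove {ι : Type*} [DecidableEq ι] (v : ι → M) (k l : ι) : ι → M :=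
  fun i => if i = k then -v k else if i = l then v l else v i + v k

theorem span_range_sellingMove {ι : Type*} [DecidableEq ι] (v : ι → M) (k l : ι) :
    span ℤ (Set.range (sellingMove v k l)) = span ℤ (Set.range v) := by
  have hv : ∀ i, v i ∈ span ℤ (Set.range v) := fun i => subset_span ⟨i, rfl⟩
  have hw : ∀ i, sellingMove v k l i ∈ span ℤ (Set.range (sellingMove v k l)) :=
    fun i => subset_span ⟨i, rfl⟩
  refine le_antisymm (span_le.2 ?_) (span_le.2 ?_) <;> rintro _ ⟨i, rfl⟩
  · unfold sellingMove
    split_ifs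
    exacts [neg_mem (hv k), hv l, add_mem (hv i) (hv k)]
  · have hk : v k = -sellingMove v k l k := by simp [sellingMove]
    by_cases hik : i = k
    · rw [hik, hk]; exact neg_mem (hw k)
    by_cases hil : i = l
    · have : v l = sellingMove v k l l := by simp [sellingMove, hil ▸ hik]
      rw [hil, this]; exact hw l
    · have : v i = sellingMove v k l i + sellingMove v k l k := by simp [sellingMove, hik, hil]
      rw [this]; exact add_mem (hw i) (hw k)

-- The move adds `vₖ` to the other indices and subtracts `2 vₖ`, so it keeps the sum only when
-- there are exactly two other indices: this is where rank `3` enters.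
theorem sum_sellingMove (v : Fin 4 → M) {k l : Fin 4} (hkl : k ≠ l) :
    ∑ i, sellingMove v k l i = ∑ i, v i := by
  fin_cases k <;> fin_cases l <;> simp_all [sellingMove, Fin.sum_univ_four] <;> abel

theorem IsSuperbase.sellingMove {v : Fin 4 → M} (hv : IsSuperbase L v) {k l : Fin 4}
    (hkl : k ≠ l) : IsSuperbase L (sellingMove v k l) :=
  ⟨(span_range_sellingMove v k l).trans hv.1, (sum_sellingMove v hkl).trans hv.2⟩

end Superbase

section Energy

variable {E : Type*} [NormedAddCommGroup E] {ι : Type*} [Fintype ι]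

noncomputable def energy (v : ι → E) : ℝ := ∑ i, ‖v i‖ ^ 2

theorem finite_setOf_energy_le [ProperSpace E] (L : Submodule ℤ E) [DiscreteTopology L] (C : ℝ) :
    {v : ι → E | (∀ i, v i ∈ L) ∧ energy v ≤ C}.Finite := by
  have hL : (Metric.closedBall (0 : E) √C ∩ L).Finite :=
    Metric.finite_isBounded_inter_isClosed DiscreteTopology.isDiscrete Metric.isBounded_closedBall
      (AddSubgroup.isClosed_of_discrete (H := L.toAddSubgroup))
  refine (Set.Finite.pi fun _ => hL).subset ?_
  rintro v ⟨hvL, hv⟩ i -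
  refine ⟨?_, hvL i⟩
  rw [mem_closedBall_zero_iff, ← abs_norm]
  exact Real.abs_le_sqrt ((single_le_sum (fun j _ => sq_nonneg ‖v j‖) (mem_univ i)).trans hv)

theorem exists_isMinOn_energy [ProperSpace E] (L : Submodule ℤ E) [DiscreteTopology L]
    {S : Set (ι → E)} (hSL : ∀ v ∈ S, ∀ i, v i ∈ L) (hS : S.Nonempty) :
    ∃ v ∈ S, IsMinOn energy S v := by
  obtain ⟨v₀, hv₀⟩ := hS
  obtain ⟨v, ⟨hvS, hv⟩, hmin⟩ := Set.exists_min_image (S ∩ {v | energy v ≤ energy v₀}) energy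
    ((finite_setOf_energy_le L _).subset fun v hv => ⟨hSL v hv.1, hv.2⟩)
    ⟨v₀, hv₀, le_refl (energy v₀)⟩
  refine ⟨v, hvS, fun w hw => ?_⟩
  rcases le_total (energy w) (energy v₀) with h | h
  · exact hmin w ⟨hw, h⟩
  · exact hv.trans h

variable [InnerProductSpace ℝ E]

theorem energy_sellingMove {v : Fin 4 → E} (hv : ∑ i, v i = 0) {k l : Fin 4} (hkl : k ≠ l) :
    energy (sellingMove v k l) = energy v - 2 * ⟪v k, v l⟫_ℝ := by
  have h := congrArg (fun x => ⟪x, v k⟫_ℝ) hv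
  simp only [Fin.sum_univ_four, inner_add_left, inner_zero_left] at h
  rw [← real_inner_comm]
  fin_cases k <;> fin_cases l <;>
    simp_all [energy, sellingMove, Fin.sum_univ_four, norm_add_sq_real] <;> linarith

theorem IsSuperbase.inner_nonpos_of_isMinOn {L : Submodule ℤ E} {v : Fin 4 → E}
    (hv : IsSuperbase L v) (hmin : IsMinOn energy {w | IsSuperbase L w} v) {k l : Fin 4}
    (hkl : k ≠ l) : ⟪v k, v l⟫_ℝ ≤ 0 := by
  have := hmin (hv.sellingMove hkl)
  rw [Set.mem_ofPred_eq, energy_sellingMove hv.2 hkl] at this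
  linarith

end Energy

/-- Selling's theorem (§B.2.2): every euclidean lattice of rank 3 is of Voronoi's first
kind, i.e. admits an obtuse superbase `(v₀, v₁, v₂, v₃)`: the vectors all lie in `L`,
`(v₁, v₂, v₃)` is a ℤ-basis of `L`, `v₀ + v₁ + v₂ + v₃ = 0`, and `⟨v_i, v_j⟩ ≤ 0` for all
`i ≠ j`. -/
theorem statement17 (E : Type*) [NormedAddCommGroup E] [InnerProductSpace ℝ E]
    [FiniteDimensional ℝ E] (hdim : Module.finrank ℝ E = 3)
    (L : Submodule ℤ E) [DiscreteTopology L] [IsZLattice ℝ L] :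
    ∃ v : Fin 4 → E,
      (∀ k, v k ∈ L) ∧
      (∃ b : Module.Basis (Fin 3) ℤ L, ∀ i : Fin 3, (b i : E) = v i.succ) ∧
      (∑ k, v k = 0) ∧
      (∀ k l, k ≠ l → (inner ℝ (v k) (v l) : ℝ) ≤ 0) := by
  have := ZLattice.module_free ℝ L
  have := ZLattice.module_finite ℝ L
  have hrank : finrank ℤ L = 3 := by rw [ZLattice.rank ℝ L, hdim]
  obtain ⟨v, hv, hmin⟩ := exists_isMinOn_energy L (S := {v : Fin 4 → E | IsSuperbase L v})
    (fun v hv => hv.mem) ⟨_, isSuperbase_cons_neg_sum (finBasisOfFinrankEq ℤ L hrank)⟩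
  exact ⟨v, hv.mem, hv.exists_basis hrank, hv.2, fun k l => hv.inner_nonpos_of_isMinOn hmin⟩
end

section
/- Fix n ≥ 1 and Selling parameters p_{ij} > 0 for 0 ≤ i < j ≤ n, and consider the lattice ℤⁿ in ℝⁿ with the inner product ⟨x, y⟩_p = Σ_{0 ≤ i < j ≤ n} p_{ij}(x_i − x_j)(y_i − y_j) (with the convention x₀ = y₀ = 0), with v_i = e_i for 1 ≤ i ≤ n, v₀ = −(e₁ + ⋯ + eₙ), and v_S = Σ_{i∈S} v_i for S ⊆ {0, …, n}. Let S and S′ be nonempty proper subsets of {0, …, n}. If there exists a point x in the Voronoi cell 𝒱 = {x ∈ ℝⁿ : ⟨x, x⟩_p ≤ ⟨x − ℓ, x − ℓ⟩_p for all ℓ ∈ ℤⁿ} such that 2⟨v_S, x⟩_p = ⟨v_S, v_S⟩_p and 2⟨v_{S′}, x⟩_p = ⟨v_{S′}, v_{S′}⟩_p, then S ⊆ S′ or S′ ⊆ S. -/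
/-- Extend `x : ℝⁿ` to coordinates indexed by `{0, …, n}` with the convention `x₀ = 0`. -/
def sellingCoord {n : ℕ} (x : Fin n → ℝ) : Fin (n + 1) → ℝ := Fin.cons 0 x

/-- The Selling bilinear form `⟨x, y⟩_p = Σ_{0 ≤ i < j ≤ n} p_{ij}(x_i − x_j)(y_i − y_j)`
on `ℝⁿ`, with the convention `x₀ = y₀ = 0`. -/
noncomputable def sellingForm (n : ℕ) (p : Fin (n + 1) → Fin (n + 1) → ℝ)
    (x y : Fin n → ℝ) : ℝ :=
  ∑ i : Fin (n + 1), ∑ j : Fin (n + 1),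
    if (i : ℕ) < (j : ℕ) then
      p i j * (sellingCoord x i - sellingCoord x j) *
        (sellingCoord y i - sellingCoord y j)
    else 0

/-- The vector `v_S = Σ_{i ∈ S} v_i`, where `v_i = e_i` for `1 ≤ i ≤ n` and
`v₀ = −(e₁ + ⋯ + eₙ)`. -/
def sellingV (n : ℕ) (S : Finset (Fin (n + 1))) : Fin n → ℝ := fun j =>
  (if j.succ ∈ S then (1 : ℝ) else 0) - (if (0 : Fin (n + 1)) ∈ S then (1 : ℝ) else 0)

/-- The Voronoi cell of the lattice `ℤⁿ` with respect to the Selling form `⟨·,·⟩_p`. -/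
noncomputable def sellingVoronoiCell (n : ℕ) (p : Fin (n + 1) → Fin (n + 1) → ℝ) :
    Set (Fin n → ℝ) :=
  {x | ∀ ℓ : Fin n → ℤ,
    sellingForm n p x x ≤
      sellingForm n p (fun i => x i - (ℓ i : ℝ)) (fun i => x i - (ℓ i : ℝ))}

/-!
Write `c = v_{S ∩ S'}`, `a = v_{S \ S'}` and `b = v_{S' \ S}`, so that `v_S = c + a`,
`v_{S'} = c + b` and `v_{S ∪ S'} = c + a + b`. Expanding,
`‖c + a‖² + ‖c + b‖² = ‖c + a + b‖² + ‖c‖² - 2⟨a, b⟩`. As `x` lies on the bisectors of the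
lattice vectors `c + a` and `c + b` and on the near side of those of `c` and `c + a + b`, this
forces `⟨a, b⟩ ≥ 0`. But for disjoint `A`, `B` the Selling form gives
`⟨v_A, v_B⟩ = -Σ p_{ij}` over the pairs `{i, j}` joining `A` to `B`, which is negative as soon as
both sets are nonempty, that is, unless `S ⊆ S'` or `S' ⊆ S`.
-/

namespace LinearMap.BilinForm

variable {M : Type*} [AddCommGroup M] [Module ℝ M] {B : LinearMap.BilinForm ℝ M}

theorem IsSymm.apply_self_le_apply_sub_self_iff (hB : B.IsSymm) (x v : M) :
    B x x ≤ B (x - v) (x - v) ↔ 2 * B v x ≤ B v v := by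
  have := hB.eq x v
  simp only [map_sub, LinearMap.sub_apply]
  constructor <;> intro h <;> linarith

theorem IsSymm.apply_nonneg_of_mem_bisector (hB : B.IsSymm) {x a b c : M}
    (hc : 2 * B c x ≤ B c c) (habc : 2 * B (c + a + b) x ≤ B (c + a + b) (c + a + b))
    (hca : 2 * B (c + a) x = B (c + a) (c + a)) (hcb : 2 * B (c + b) x = B (c + b) (c + b)) :
    0 ≤ B a b := by
  have := hB.eq a c; have := hB.eq b c; have := hB.eq b a
  simp only [map_add, LinearMap.add_apply] at *
  linarith

end LinearMap.BilinForm

section DisjointIndicator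

variable {α : Type*} [DecidableEq α] {A B : Finset α}

theorem ite_mem_union_of_disjoint (hAB : Disjoint A B) (k : α) :
    (if k ∈ A ∪ B then (1 : ℝ) else 0) = (if k ∈ A then 1 else 0) + (if k ∈ B then 1 else 0) := by
  by_cases hk : k ∈ A
  · simp [hk, Finset.disjoint_left.mp hAB hk]
  · simp [hk]

theorem ite_mem_mul_ite_mem_of_disjoint (hAB : Disjoint A B) (k : α) :
    (if k ∈ A then (1 : ℝ) else 0) * (if k ∈ B then 1 else 0) = 0 := by
  by_cases hk : k ∈ A
  · simp [hk, Finset.disjoint_left.mp hAB hk]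
  · simp [hk]

end DisjointIndicator

section Selling

variable {n : ℕ}

@[simp] theorem sellingCoord_add (x y : Fin n → ℝ) :
    sellingCoord (x + y) = sellingCoord x + sellingCoord y := by
  ext k; refine Fin.cases ?_ (fun j => ?_) k <;> simp [sellingCoord]

@[simp] theorem sellingCoord_smul (c : ℝ) (x : Fin n → ℝ) :
    sellingCoord (c • x) = c • sellingCoord x := by
  ext k; refine Fin.cases ?_ (fun j => ?_) k <;> simp [sellingCoord]

theorem sellingCoord_sellingV (T : Finset (Fin (n + 1))) (k : Fin (n + 1)) :
    sellingCoord (sellingV n T) k =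
      (if k ∈ T then (1 : ℝ) else 0) - (if (0 : Fin (n + 1)) ∈ T then (1 : ℝ) else 0) := by
  refine Fin.cases ?_ (fun j => ?_) k <;> simp [sellingCoord, sellingV]

theorem sellingCoord_sellingV_sub (T : Finset (Fin (n + 1))) (i j : Fin (n + 1)) :
    sellingCoord (sellingV n T) i - sellingCoord (sellingV n T) j =
      (if i ∈ T then (1 : ℝ) else 0) - (if j ∈ T then (1 : ℝ) else 0) := by
  rw [sellingCoord_sellingV, sellingCoord_sellingV]; ring

theorem sellingV_union_of_disjoint {A B : Finset (Fin (n + 1))} (hAB : Disjoint A B) :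
    sellingV n (A ∪ B) = sellingV n A + sellingV n B := by
  ext j
  simp only [sellingV, Pi.add_apply, ite_mem_union_of_disjoint hAB]
  ring

theorem exists_intCast_eq_sellingV (T : Finset (Fin (n + 1))) :
    ∃ ℓ : Fin n → ℤ, (fun i => (ℓ i : ℝ)) = sellingV n T :=
  ⟨fun j => (if j.succ ∈ T then 1 else 0) - (if (0 : Fin (n + 1)) ∈ T then 1 else 0), by
    ext j; simp [sellingV]⟩

variable (n) in
noncomputable def sellingBilin (p : Fin (n + 1) → Fin (n + 1) → ℝ) :
    LinearMap.BilinForm ℝ (Fin n → ℝ) :=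
  LinearMap.mk₂ ℝ (sellingForm n p)
    (fun x x' y => by
      simp only [sellingForm, sellingCoord_add, Pi.add_apply, ← Finset.sum_add_distrib]
      refine Finset.sum_congr rfl fun i _ => Finset.sum_congr rfl fun j _ => ?_
      split_ifs <;> ring)
    (fun c x y => by
      simp only [sellingForm, sellingCoord_smul, Pi.smul_apply, smul_eq_mul, Finset.mul_sum]
      refine Finset.sum_congr rfl fun i _ => Finset.sum_congr rfl fun j _ => ?_
      split_ifs <;> ring)
    (fun x y y' => by
      simp only [sellingForm, sellingCoord_add, Pi.add_apply, ← Finset.sum_add_distrib]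
      refine Finset.sum_congr rfl fun i _ => Finset.sum_congr rfl fun j _ => ?_
      split_ifs <;> ring)
    (fun c x y => by
      simp only [sellingForm, sellingCoord_smul, Pi.smul_apply, smul_eq_mul, Finset.mul_sum]
      refine Finset.sum_congr rfl fun i _ => Finset.sum_congr rfl fun j _ => ?_
      split_ifs <;> ring)

@[simp] theorem sellingBilin_apply (p : Fin (n + 1) → Fin (n + 1) → ℝ) (x y : Fin n → ℝ) :
    sellingBilin n p x y = sellingForm n p x y := by
  rw [sellingBilin, LinearMap.mk₂_apply]

variable (n) in
theorem isSymm_sellingBilin (p : Fin (n + 1) → Fin (n + 1) → ℝ) :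
    (sellingBilin n p).IsSymm :=
  ⟨fun x y => by
    simp only [sellingBilin_apply, sellingForm]
    refine Finset.sum_congr rfl fun i _ => Finset.sum_congr rfl fun j _ => ?_
    split_ifs <;> ring⟩

theorem sellingForm_sellingV_of_disjoint (p : Fin (n + 1) → Fin (n + 1) → ℝ)
    {A B : Finset (Fin (n + 1))} (hAB : Disjoint A B) :
    sellingForm n p (sellingV n A) (sellingV n B) =
      -∑ i : Fin (n + 1), ∑ j : Fin (n + 1), if (i : ℕ) < (j : ℕ) then
        p i j * ((if i ∈ A then 1 else 0) * (if j ∈ B then 1 else 0) +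
          (if j ∈ A then 1 else 0) * (if i ∈ B then 1 else 0)) else 0 := by
  simp only [sellingForm, sellingCoord_sellingV_sub, ← Finset.sum_neg_distrib]
  refine Finset.sum_congr rfl fun i _ => Finset.sum_congr rfl fun j _ => ?_
  by_cases hij : (i : ℕ) < (j : ℕ)
  · rw [if_pos hij, if_pos hij]
    linear_combination p i j * (ite_mem_mul_ite_mem_of_disjoint hAB i +
      ite_mem_mul_ite_mem_of_disjoint hAB j)
  · rw [if_neg hij, if_neg hij, neg_zero]

theorem sellingForm_sellingV_neg_of_disjoint {p : Fin (n + 1) → Fin (n + 1) → ℝ}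
    (hp : ∀ i j : Fin (n + 1), (i : ℕ) < (j : ℕ) → 0 < p i j)
    {A B : Finset (Fin (n + 1))} (hAB : Disjoint A B) {a b : Fin (n + 1)} (ha : a ∈ A)
    (hb : b ∈ B) : sellingForm n p (sellingV n A) (sellingV n B) < 0 := by
  rw [sellingForm_sellingV_of_disjoint p hAB, neg_lt_zero]
  set f : Fin (n + 1) → Fin (n + 1) → ℝ := fun i j => if (i : ℕ) < (j : ℕ) then
    p i j * ((if i ∈ A then 1 else 0) * (if j ∈ B then 1 else 0) +
      (if j ∈ A then 1 else 0) * (if i ∈ B then 1 else 0)) else 0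
  have hf : ∀ i j, 0 ≤ f i j := fun i j => by
    by_cases h : (i : ℕ) < (j : ℕ)
    · have := hp i j h; simp only [f, if_pos h]; positivity
    · simp only [f, if_neg h, le_refl]
  have haB : a ∉ B := Finset.disjoint_left.mp hAB ha
  have hbA : b ∉ A := Finset.disjoint_right.mp hAB hb
  obtain ⟨i, j, hij⟩ : ∃ i j, 0 < f i j := by
    rcases lt_or_gt_of_ne (Fin.val_ne_of_ne (ne_of_mem_of_not_mem ha hbA)) with h | h
    · refine ⟨a, b, ?_⟩
      simpa only [f, if_pos h, if_pos ha, if_pos hb, if_neg haB, if_neg hbA, mul_one, mul_zero,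
        add_zero] using hp a b h
    · refine ⟨b, a, ?_⟩
      simpa only [f, if_pos h, if_pos ha, if_pos hb, if_neg haB, if_neg hbA, mul_one, mul_zero,
        zero_add] using hp b a h
  calc 0 < f i j := hij
    _ ≤ ∑ j', f i j' := Finset.single_le_sum (fun j' _ => hf i j') (Finset.mem_univ j)
    _ ≤ ∑ i', ∑ j', f i' j' := Finset.single_le_sum (f := fun i' => ∑ j', f i' j')
        (fun i' _ => Finset.sum_nonneg fun j' _ => hf i' j') (Finset.mem_univ i)

theorem mem_sellingVoronoiCell_iff (p : Fin (n + 1) → Fin (n + 1) → ℝ) (x : Fin n → ℝ) :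
    x ∈ sellingVoronoiCell n p ↔ ∀ ℓ : Fin n → ℤ,
      2 * sellingForm n p (fun i => (ℓ i : ℝ)) x ≤
        sellingForm n p (fun i => (ℓ i : ℝ)) (fun i => (ℓ i : ℝ)) :=
  forall_congr' fun _ => (isSymm_sellingBilin n p).apply_self_le_apply_sub_self_iff x _

theorem two_mul_sellingForm_sellingV_le {p : Fin (n + 1) → Fin (n + 1) → ℝ} {x : Fin n → ℝ}
    (hx : x ∈ sellingVoronoiCell n p) (T : Finset (Fin (n + 1))) :
    2 * sellingForm n p (sellingV n T) x ≤ sellingForm n p (sellingV n T) (sellingV n T) := by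
  obtain ⟨ℓ, hℓ⟩ := exists_intCast_eq_sellingV (n := n) T
  exact hℓ ▸ (mem_sellingVoronoiCell_iff p x).mp hx ℓ

end Selling

theorem statement18_general (n : ℕ) (p : Fin (n + 1) → Fin (n + 1) → ℝ)
    (hp : ∀ i j : Fin (n + 1), (i : ℕ) < (j : ℕ) → 0 < p i j)
    (S S' : Finset (Fin (n + 1)))
    (x : Fin n → ℝ) (hx : x ∈ sellingVoronoiCell n p)
    (h1 : 2 * sellingForm n p (sellingV n S) x =
      sellingForm n p (sellingV n S) (sellingV n S))
    (h2 : 2 * sellingForm n p (sellingV n S') x =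
      sellingForm n p (sellingV n S') (sellingV n S')) :
    S ⊆ S' ∨ S' ⊆ S := by
  by_contra! hS
  obtain ⟨a, haS, haS'⟩ := Finset.not_subset.mp hS.1
  obtain ⟨b, hbS', hbS⟩ := Finset.not_subset.mp hS.2
  have hvS : sellingV n S = sellingV n (S ∩ S') + sellingV n (S \ S') := by
    rw [add_comm, ← sellingV_union_of_disjoint (Finset.disjoint_sdiff_inter S S'),
      Finset.sdiff_union_inter]
  have hvS' : sellingV n S' = sellingV n (S ∩ S') + sellingV n (S' \ S) := by
    rw [add_comm, Finset.inter_comm, ← sellingV_union_of_disjoint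
      (Finset.disjoint_sdiff_inter S' S), Finset.sdiff_union_inter]
  have hvU : sellingV n (S ∪ S') =
      sellingV n (S ∩ S') + sellingV n (S \ S') + sellingV n (S' \ S) := by
    rw [← hvS, ← sellingV_union_of_disjoint Finset.disjoint_sdiff,
      Finset.union_sdiff_self_eq_union]
  have hnonneg := (isSymm_sellingBilin n p).apply_nonneg_of_mem_bisector
    (two_mul_sellingForm_sellingV_le hx (S ∩ S')) (hvU ▸ two_mul_sellingForm_sellingV_le hx _)
    (hvS ▸ h1) (hvS' ▸ h2)
  exact (sellingForm_sellingV_neg_of_disjoint hp disjoint_sdiff_sdiff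
    (Finset.mem_sdiff.mpr ⟨haS, haS'⟩) (Finset.mem_sdiff.mpr ⟨hbS', hbS⟩)).not_ge hnonneg

/-- Lemma B.7: if two facets `F_S`, `F_{S'}` of the Voronoi cell of the lattice `V̄(p)`
(given by `2⟨v_S, x⟩_p = ⟨v_S, v_S⟩_p` etc.) contain a common point of the Voronoi cell,
then `S ⊆ S'` or `S' ⊆ S`. -/
theorem statement18 (n : ℕ) (hn : 1 ≤ n) (p : Fin (n + 1) → Fin (n + 1) → ℝ)
    (hp : ∀ i j : Fin (n + 1), (i : ℕ) < (j : ℕ) → 0 < p i j)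
    (S S' : Finset (Fin (n + 1)))
    (hS : S.Nonempty) (hS' : S'.Nonempty)
    (hSne : S ≠ Finset.univ) (hS'ne : S' ≠ Finset.univ)
    (x : Fin n → ℝ) (hx : x ∈ sellingVoronoiCell n p)
    (h1 : 2 * sellingForm n p (sellingV n S) x =
      sellingForm n p (sellingV n S) (sellingV n S))
    (h2 : 2 * sellingForm n p (sellingV n S') x =
      sellingForm n p (sellingV n S') (sellingV n S')) :
    S ⊆ S' ∨ S' ⊆ S :=
  statement18_general n p hp S S' x hx h1 h2
end
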